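/- Let G be a compact group acting continuously by isometries on a pointed metric space M. Then the Lipschitz-free space F(M/G) over the orbit space (orbit closures with quotient metric) is isometrically isomorphic to a 1-complemented subspace of F(M); namely, the Haar-averaging projection R_G : F(M) → F(M) has range linearly isometric to F(M/G), via the isometry sending δ([Gx]) to R_G(δ(x)). -/

import Mathlib

open MeasureTheory
open scoped NNReal

/-- `(V, δ)` is (a realization of) the Lipschitz-free space over the pointed metric space
`(M, base)`. -/
def IsFreeSpace {M V : Type*} [MetricSpace M] [NormedAddCommGroup V] [NormedSpace ℝ V]
    (base : M) (δ : M → V) : Prop :=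
  Isometry δ ∧ δ base = 0 ∧ Dense (Submodule.span ℝ (Set.range δ) : Set V) ∧
  ∀ (K : ℝ≥0) (h : M → ℝ), LipschitzWith K h → h base = 0 →
    ∃ f : V →L[ℝ] ℝ, ‖f‖ ≤ K ∧ ∀ m : M, f (δ m) = h m

/-!
Let `R` be the Haar average. Right invariance of `μ` makes `R ∘ δ` constant on orbits, hence,
being `1`-Lipschitz, on orbit closures; so it factors through a `1`-Lipschitz map
`Φ : M/G → F(M)`, whose linearization is `J : F(M/G) → F(M)` with `‖J‖ ≤ 1`. The linearization
`P : F(M) → F(M/G)` of the quotient map is `T g`-invariant, so `P ∘ R = P`. On generators one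
checks `P ∘ J = id` and `J ∘ P = R`: hence `J` is an isometry and `R = J ∘ P` is a projection
onto the range of `J`.
-/

namespace IsFreeSpace

variable {M V E : Type*} [MetricSpace M] [NormedAddCommGroup V] [NormedSpace ℝ V]
  [NormedAddCommGroup E] [NormedSpace ℝ E] {base : M} {δ : M → V}

theorem ext (hδ : IsFreeSpace base δ) {A B : V →L[ℝ] E} (h : ∀ m, A (δ m) = B (δ m)) :
    A = B :=
  ContinuousLinearMap.ext_on hδ.2.2.1 (by rintro _ ⟨m, rfl⟩; exact h m)

/-- Hahn–Banach reduces this vector-valued bound to the scalar extension property. -/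
theorem norm_linearCombination_le (hδ : IsFreeSpace base δ) {K : ℝ≥0} {Φ : M → E}
    (hΦ : LipschitzWith K Φ) (hΦ0 : Φ base = 0) (c : M →₀ ℝ) :
    ‖Finsupp.linearCombination ℝ Φ c‖ ≤ K * ‖Finsupp.linearCombination ℝ δ c‖ := by
  refine NormedSpace.norm_le_dual_bound ℝ _ (by positivity) fun f => ?_
  obtain ⟨f', hf'K, hf'⟩ := hδ.2.2.2 _ _ (f.lipschitz.comp hΦ) (by simp [hΦ0])
  have hff' : f (Finsupp.linearCombination ℝ Φ c) = f' (Finsupp.linearCombination ℝ δ c) := by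
    rw [← f.coe_coe, ← f'.coe_coe, Finsupp.apply_linearCombination,
      Finsupp.apply_linearCombination]
    congr 2
    exact funext fun m => (hf' m).symm
  calc ‖f (Finsupp.linearCombination ℝ Φ c)‖
      ≤ ‖f'‖ * ‖Finsupp.linearCombination ℝ δ c‖ := hff' ▸ f'.le_opNorm _
    _ ≤ ‖f‖ * K * ‖Finsupp.linearCombination ℝ δ c‖ := by gcongr; simpa using hf'K
    _ = K * ‖Finsupp.linearCombination ℝ δ c‖ * ‖f‖ := by ring

theorem exists_lift [CompleteSpace E] (hδ : IsFreeSpace base δ) {K : ℝ≥0} {Φ : M → E}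
    (hΦ : LipschitzWith K Φ) (hΦ0 : Φ base = 0) :
    ∃ L : V →L[ℝ] E, ‖L‖ ≤ K ∧ ∀ m, L (δ m) = Φ m := by
  have hdense : DenseRange (Finsupp.linearCombination ℝ δ) := by
    rw [DenseRange, ← LinearMap.coe_range, Finsupp.range_linearCombination]
    exact hδ.2.2.1
  have hbound := hδ.norm_linearCombination_le hΦ hΦ0
  refine ⟨(Finsupp.linearCombination ℝ Φ).extendOfNorm (Finsupp.linearCombination ℝ δ),
    LinearMap.opNorm_extendOfNorm_le hdense K.2 hbound, fun m => ?_⟩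
  simpa using LinearMap.extendOfNorm_eq hdense ⟨K, hbound⟩ (Finsupp.single m 1)

end IsFreeSpace

theorem Function.Surjective.exists_lipschitzWith_factor {M N X : Type*} [PseudoMetricSpace M]
    [PseudoMetricSpace N] [MetricSpace X] {q : M → N} (hq : Surjective q) {K : ℝ≥0}
    {F : M → X} (hF : ∀ x y, dist (F x) (F y) ≤ K * dist (q x) (q y)) :
    ∃ Φ : N → X, LipschitzWith K Φ ∧ ∀ x, Φ (q x) = F x := by
  refine ⟨F ∘ surjInv hq, LipschitzWith.of_dist_le_mul fun n n' => ?_, fun x => ?_⟩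
  · simpa only [comp_apply, surjInv_eq hq] using hF (surjInv hq n) (surjInv hq n')
  · simpa [surjInv_eq hq] using hF (surjInv hq (q x)) x

section OrbitClosureDist

variable {G M : Type*} [Group G] [MulAction G M] [MetricSpace M]

variable (G) in
noncomputable def orbitClosureDist (x y : M) : ℝ :=
  sInf ((fun p : M × M => dist p.1 p.2) ''
    (closure (MulAction.orbit G x) ×ˢ closure (MulAction.orbit G y)))

theorem orbitClosureDist_le_dist_of_mem {x y x' y' : M}
    (hx' : x' ∈ closure (MulAction.orbit G x)) (hy' : y' ∈ closure (MulAction.orbit G y)) :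
    orbitClosureDist G x y ≤ dist x' y' :=
  csInf_le ⟨0, by rintro _ ⟨p, -, rfl⟩; exact dist_nonneg⟩ ⟨(x', y'), ⟨hx', hy'⟩, rfl⟩

theorem orbitClosureDist_le_dist (x y : M) : orbitClosureDist G x y ≤ dist x y :=
  orbitClosureDist_le_dist_of_mem (subset_closure (MulAction.mem_orbit_self x))
    (subset_closure (MulAction.mem_orbit_self y))

theorem orbitClosureDist_smul_self (g : G) (x : M) : orbitClosureDist G (g • x) x = 0 := by
  refine le_antisymm ?_ (Real.sInf_nonneg (by rintro _ ⟨p, -, rfl⟩; exact dist_nonneg))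
  simpa using orbitClosureDist_le_dist_of_mem (subset_closure (MulAction.mem_orbit_self (g • x)))
    (subset_closure (MulAction.mem_orbit x g))

theorem LipschitzWith.dist_le_orbitClosureDist {X : Type*} [MetricSpace X] {F : M → X}
    (hF : LipschitzWith 1 F) (hinv : ∀ (g : G) x, F (g • x) = F x) (x y : M) :
    dist (F x) (F y) ≤ orbitClosureDist G x y := by
  have hclosure : ∀ z, ∀ z' ∈ closure (MulAction.orbit G z), F z' = F z := fun z =>
    closure_minimal (by rintro _ ⟨g, rfl⟩; exact hinv g z)
      (isClosed_eq hF.continuous continuous_const)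
  refine le_csInf ⟨_, (x, y), ⟨subset_closure (MulAction.mem_orbit_self x),
    subset_closure (MulAction.mem_orbit_self y)⟩, rfl⟩ ?_
  rintro _ ⟨⟨x', y'⟩, ⟨hx', hy'⟩, rfl⟩
  rw [← hclosure x x' hx', ← hclosure y y' hy']
  simpa using hF.dist_le_mul x' y'

variable {N : Type*} [MetricSpace N] {q : M → N}

theorem apply_smul_of_dist_eq_orbitClosureDist
    (hq : ∀ x y, dist (q x) (q y) = orbitClosureDist G x y) (g : G) (x : M) : q (g • x) = q x :=
  dist_le_zero.mp ((hq _ _).trans_le (orbitClosureDist_smul_self g x).le)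

theorem lipschitzWith_one_of_dist_eq_orbitClosureDist
    (hq : ∀ x y, dist (q x) (q y) = orbitClosureDist G x y) : LipschitzWith 1 q :=
  .of_dist_le_mul fun x y => by
    rw [hq, NNReal.coe_one, one_mul]
    exact orbitClosureDist_le_dist x y

theorem exists_lipschitzWith_one_factor_of_dist_eq_orbitClosureDist
    (hq : ∀ x y, dist (q x) (q y) = orbitClosureDist G x y) (hsurj : q.Surjective)
    {X : Type*} [MetricSpace X] {F : M → X} (hF : LipschitzWith 1 F)
    (hinv : ∀ (g : G) x, F (g • x) = F x) :
    ∃ Φ : N → X, LipschitzWith 1 Φ ∧ ∀ x, Φ (q x) = F x :=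
  hsurj.exists_lipschitzWith_factor fun x y => by
    rw [hq, NNReal.coe_one, one_mul]
    exact hF.dist_le_orbitClosureDist hinv x y

end OrbitClosureDist

section HaarAverage

variable {G V : Type*} [TopologicalSpace G] [CompactSpace G] [MeasurableSpace G]
  [OpensMeasurableSpace G] [NormedAddCommGroup V] [NormedSpace ℝ V]
  (μ : Measure G) [IsProbabilityMeasure μ] {T : G → V →L[ℝ] V}

noncomputable def averageCLM (hT : ∀ v, Continuous fun g => T g v)
    (hT1 : ∀ g v, ‖T g v‖ ≤ ‖v‖) : V →L[ℝ] V :=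
  LinearMap.mkContinuous
    { toFun := fun v => ∫ g, T g v ∂μ
      map_add' := fun v w => by
        simp only [map_add]
        exact integral_add ((hT v).integrable_of_hasCompactSupport (.of_compactSpace _))
          ((hT w).integrable_of_hasCompactSupport (.of_compactSpace _))
      map_smul' := fun c v => by
        simp only [map_smul]
        exact integral_smul c _ }
    1 fun v => by
      simpa using norm_integral_le_of_norm_le_const (μ := μ) (.of_forall fun g => hT1 g v)

variable (hT : ∀ v, Continuous fun g => T g v) (hT1 : ∀ g v, ‖T g v‖ ≤ ‖v‖)

theorem averageCLM_apply (v : V) : averageCLM μ hT hT1 v = ∫ g, T g v ∂μ := rfl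

theorem norm_averageCLM_le : ‖averageCLM μ hT hT1‖ ≤ 1 :=
  LinearMap.mkContinuous_norm_le _ zero_le_one _

theorem comp_averageCLM [CompleteSpace V] {E : Type*} [NormedAddCommGroup E] [NormedSpace ℝ E]
    [CompleteSpace E] {P : V →L[ℝ] E} (hP : ∀ g, P ∘L T g = P) : P ∘L averageCLM μ hT hT1 = P := by
  ext v
  rw [ContinuousLinearMap.comp_apply, averageCLM_apply,
    ← P.integral_comp_comm ((hT v).integrable_of_hasCompactSupport (.of_compactSpace _))]
  simp only [← ContinuousLinearMap.comp_apply, hP]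
  simp

theorem averageCLM_apply_smul [Group G] {M : Type*} [TopologicalSpace M] [MulAction G M]
    [ContinuousSMul G M] [MeasurableMul G] [μ.IsMulRightInvariant] {base : M} {δ : M → V}
    (hδ : Continuous δ) (hTδ : ∀ g m, T g (δ m) = δ (g • m) - δ (g • base)) (g : G) (x : M) :
    averageCLM μ hT hT1 (δ (g • x)) = averageCLM μ hT hT1 (δ x) := by
  have hint : ∀ y : M, Integrable (fun h : G => δ (h • y)) μ := fun y =>
    (hδ.comp (continuous_id.smul continuous_const)).integrable_of_hasCompactSupport
      (.of_compactSpace _)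
  simp only [averageCLM_apply, hTδ]
  rw [integral_sub (hint _) (hint _), integral_sub (hint _) (hint _)]
  simp_rw [← mul_smul]
  rw [integral_mul_right_eq_self (fun h => δ (h • x)) g]

end HaarAverage

theorem stmt_17_general {M : Type*} [MetricSpace M] (base : M)
    {G : Type*} [Group G] [TopologicalSpace G] [IsTopologicalGroup G]
    [CompactSpace G] [MeasurableSpace G] [BorelSpace G]
    (μ : Measure G) [IsProbabilityMeasure μ]
    [μ.IsMulRightInvariant]
    [MulAction G M]
    (hcontM : Continuous fun p : G × M => p.1 • p.2)
    {V : Type*} [NormedAddCommGroup V] [NormedSpace ℝ V] [CompleteSpace V]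
    (δ : M → V) (hfree : IsFreeSpace base δ)
    (T : G → V →L[ℝ] V)
    (hT : ∀ (g : G) (m : M), T g (δ m) = δ (g • m) - δ (g • base))
    (hTiso : ∀ g : G, Isometry (T g))
    (hTcont : Continuous fun p : G × V => T p.1 p.2)
    {N : Type*} [MetricSpace N] (q : M → N) (hq : Function.Surjective q)
    (hdist : ∀ x y : M, dist (q x) (q y) = sInf ((fun p : M × M => dist p.1 p.2) ''
        (closure (MulAction.orbit G x) ×ˢ closure (MulAction.orbit G y))))
    {W : Type*} [NormedAddCommGroup W] [NormedSpace ℝ W] [CompleteSpace W]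
    (δ' : N → W) (hfree' : IsFreeSpace (q base) δ') :
    let Rm : V → V := fun v => ∫ g, T g v ∂μ
    (∀ v w : V, Rm (v + w) = Rm v + Rm w) ∧
    (∀ (c : ℝ) (v : V), Rm (c • v) = c • Rm v) ∧
    (∀ v : V, ‖Rm v‖ ≤ ‖v‖) ∧
    (∀ v : V, Rm (Rm v) = Rm v) ∧
    ∃ J : W →ₗᵢ[ℝ] V,
      (∀ x : M, J (δ' (q x)) = Rm (δ x)) ∧ Set.range J = Set.range Rm := by
  have : ContinuousSMul G M := ⟨hcontM⟩
  have hTc (v : V) : Continuous fun g => T g v := hTcont.comp (.prodMk_left v)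
  have hT1 (g : G) (v : V) : ‖T g v‖ ≤ ‖v‖ :=
    ((hTiso g).norm_map_of_map_zero (map_zero _) v).le
  set R := averageCLM μ hTc hT1
  have hR1 : ‖R‖ ≤ 1 := norm_averageCLM_le μ hTc hT1
  have hRδ : LipschitzWith 1 (R ∘ δ) := by
    simpa using (ContinuousLinearMap.lipschitzWith_of_opNorm_le hR1).comp hfree.1.lipschitz
  obtain ⟨Φ, hΦ, hΦq⟩ := exists_lipschitzWith_one_factor_of_dist_eq_orbitClosureDist hdist hq
    hRδ fun g x => averageCLM_apply_smul μ hTc hT1 hfree.1.continuous hT g x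
  obtain ⟨J, hJ1, hJ⟩ := hfree'.exists_lift hΦ (by simp [hΦq, hfree.2.1])
  obtain ⟨P, hP1, hP⟩ := hfree.exists_lift
    (hfree'.1.lipschitz.comp (lipschitzWith_one_of_dist_eq_orbitClosureDist hdist)) hfree'.2.1
  have hPR : P ∘L R = P := comp_averageCLM μ hTc hT1 fun g =>
    hfree.ext fun m => by
      simp [hT, hP, apply_smul_of_dist_eq_orbitClosureDist hdist, hfree'.2.1]
  have hPJ : Function.LeftInverse P J := DFunLike.congr_fun (hfree'.ext (A := P ∘L J)
      (B := .id ℝ W) fun n => by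
    obtain ⟨x, rfl⟩ := hq n
    simpa [hJ, hΦq, hP] using congr($hPR (δ x)))
  have hRJP : ⇑R = J ∘ P := by
    rw [← J.coe_comp, hfree.ext (A := J ∘L P) (B := R) fun x => by simp [hP, hJ, hΦq]]
  have hJnorm (w : W) : ‖J w‖ = ‖w‖ :=
    le_antisymm (by simpa using J.le_of_opNorm_le hJ1 w)
      (by simpa [hPJ w] using P.le_of_opNorm_le hP1 (J w))
  refine ⟨map_add R, map_smul R, fun v => (R.le_of_opNorm_le hR1 v).trans_eq (one_mul _),
    fun v => ?_, ⟨J, hJnorm⟩, fun x => (hJ _).trans (hΦq x), ?_⟩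
  · change R (R v) = R v
    simp only [hRJP, Function.comp_apply, hPJ (P v)]
  · change Set.range J = Set.range R
    rw [hRJP, hPJ.surjective.range_comp]

/-- Let `G` be a compact group (with Haar probability `μ`) acting continuously by isometries
on a pointed metric space `M`.  Let `(V, δ)` realize `F(M)`, let `N = M/G` be the space of
orbit closures with the quotient metric (via `q`), and let `(W, δ')` realize `F(M/G)`.
With `T_g` the induced linear isometries of `V` and `R_G(v) = ∫ T_g v dμ(g)` the Haar
averaging projection, `F(M/G)` embeds isometrically onto the range of `R_G` via
`δ'([Gx]) ↦ R_G(δ x)`; in particular `F(M/G)` is isometric to a `1`-complemented subspace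
of `F(M)`. -/
theorem stmt_17 {M : Type*} [MetricSpace M] (base : M)
    {G : Type*} [Group G] [TopologicalSpace G] [IsTopologicalGroup G]
    [CompactSpace G] [MeasurableSpace G] [BorelSpace G]
    (μ : Measure G) [IsProbabilityMeasure μ]
    [μ.IsMulLeftInvariant] [μ.IsMulRightInvariant]
    [MulAction G M]
    (hisoM : ∀ g : G, Isometry (fun x : M => g • x))
    (hcontM : Continuous fun p : G × M => p.1 • p.2)
    {V : Type*} [NormedAddCommGroup V] [NormedSpace ℝ V] [CompleteSpace V]
    (δ : M → V) (hfree : IsFreeSpace base δ)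
    (T : G → V →L[ℝ] V)
    (hT : ∀ (g : G) (m : M), T g (δ m) = δ (g • m) - δ (g • base))
    (hTiso : ∀ g : G, Isometry (T g))
    (hTcont : Continuous fun p : G × V => T p.1 p.2)
    {N : Type*} [MetricSpace N] (q : M → N) (hq : Function.Surjective q)
    (hdist : ∀ x y : M, dist (q x) (q y) = sInf ((fun p : M × M => dist p.1 p.2) ''
        (closure (MulAction.orbit G x) ×ˢ closure (MulAction.orbit G y))))
    {W : Type*} [NormedAddCommGroup W] [NormedSpace ℝ W] [CompleteSpace W]
    (δ' : N → W) (hfree' : IsFreeSpace (q base) δ') :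
    let Rm : V → V := fun v => ∫ g, T g v ∂μ
    (∀ v w : V, Rm (v + w) = Rm v + Rm w) ∧
    (∀ (c : ℝ) (v : V), Rm (c • v) = c • Rm v) ∧
    (∀ v : V, ‖Rm v‖ ≤ ‖v‖) ∧
    (∀ v : V, Rm (Rm v) = Rm v) ∧
    ∃ J : W →ₗᵢ[ℝ] V,
      (∀ x : M, J (δ' (q x)) = Rm (δ x)) ∧ Set.range J = Set.range Rm :=
  stmt_17_general base μ hcontM δ hfree T hT hTiso hTcont q hq hdist δ' hfree'
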